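/- arXiv:2404.09743 — 7 statements merged into one kernel-verified Lean document; each statement's English description precedes it below -/
import Mathlib

section
/- Let (Φ, Ψ) be a continuous bi-g-frame for H with bounds A and B such that ω ↦ Ψ_ω* Φ_ω f is Bochner integrable for every f ∈ H. Then the continuous bi-g-frame operator S_{Φ,Ψ} is a bounded self-adjoint operator on H, it is positive and satisfies A·I ≤ S_{Φ,Ψ} ≤ B·I, it is invertible in B(H), and ‖S_{Φ,Ψ}⁻¹‖ ≤ 1/A. -/
open MeasureTheory ContinuousLinearMap
open scoped ComplexOrder

noncomputable section

variable {Ω : Type*} [MeasurableSpace Ω] {H : Type*}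
  [NormedAddCommGroup H] [InnerProductSpace ℂ H] [CompleteSpace H]
  {G : Ω → Type*} [∀ ω, NormedAddCommGroup (G ω)]
  [∀ ω, InnerProductSpace ℂ (G ω)] [∀ ω, CompleteSpace (G ω)]

/-- `(Φ, Ψ)` is a continuous bi-`g`-frame for `H` with bounds `A`, `B`. -/
def IsContBiGFrame (μ : Measure Ω) (Φ Ψ : ∀ ω, H →L[ℂ] G ω) (A B : ℝ) : Prop :=
  ∀ f : H,
    Integrable (fun ω => (inner ℂ (Φ ω f) (Ψ ω f) : ℂ)) μ ∧
    ((A * ‖f‖ ^ 2 : ℝ) : ℂ) ≤ ∫ ω, (inner ℂ (Φ ω f) (Ψ ω f) : ℂ) ∂μ ∧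
    ∫ ω, (inner ℂ (Φ ω f) (Ψ ω f) : ℂ) ∂μ ≤ ((B * ‖f‖ ^ 2 : ℝ) : ℂ)

/-- if `(Φ, Ψ)` is a continuous bi-`g`-frame with bounds `A`, `B` and
`ω ↦ Ψ_ω* Φ_ω f` is Bochner integrable for each `f`, then the continuous bi-`g`-frame operator
`S = S_{Φ,Ψ}` (given by `S f = ∫_Ω Ψ_ω* Φ_ω f dμ(ω)`) is a bounded self-adjoint operator, it is
positive and satisfies `A·I ≤ S ≤ B·I`, it is invertible in `B(H)`, and `‖S⁻¹‖ ≤ 1/A`. -/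
theorem biGFrameOperator_selfAdjoint_positive_invertible
    (μ : Measure Ω) (Φ Ψ : ∀ ω, H →L[ℂ] G ω) (A B : ℝ) (hA : 0 < A) (hAB : A ≤ B)
    (hframe : IsContBiGFrame μ Φ Ψ A B)
    (hBochner : ∀ f : H, Integrable (fun ω => adjoint (Ψ ω) (Φ ω f)) μ) :
    ∃ S : H →L[ℂ] H,
      (∀ f : H, S f = ∫ ω, adjoint (Ψ ω) (Φ ω f) ∂μ) ∧
      IsSelfAdjoint S ∧
      S.IsPositive ∧
      (S - (A : ℂ) • (1 : H →L[ℂ] H)).IsPositive ∧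
      ((B : ℂ) • (1 : H →L[ℂ] H) - S).IsPositive ∧
      ∃ Sinv : H →L[ℂ] H, S.comp Sinv = 1 ∧ Sinv.comp S = 1 ∧ ‖Sinv‖ ≤ 1 / A := by
  -- the underlying linear map
  set T : H →ₗ[ℂ] H :=
    { toFun := fun f => ∫ ω, adjoint (Ψ ω) (Φ ω f) ∂μ
      map_add' := by
        intro f g
        simp only [map_add]
        exact integral_add (hBochner f) (hBochner g)
      map_smul' := by
        intro c f
        simp only [ContinuousLinearMap.map_smul, RingHom.id_apply]
        exact integral_smul c _ } with hT
  have hTf : ∀ f : H, T f = ∫ ω, adjoint (Ψ ω) (Φ ω f) ∂μ := fun f => rfl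
  -- the key inner product identity
  have hkey : ∀ f : H, (inner ℂ (T f) f : ℂ) = ∫ ω, (inner ℂ (Φ ω f) (Ψ ω f) : ℂ) ∂μ := by
    intro f
    have h1 : (inner ℂ f (T f) : ℂ) = ∫ ω, (inner ℂ f (adjoint (Ψ ω) (Φ ω f)) : ℂ) ∂μ :=
      (integral_inner (hBochner f) f).symm
    have h2 : ∀ ω, (inner ℂ f (adjoint (Ψ ω) (Φ ω f)) : ℂ)
        = (starRingEnd ℂ) (inner ℂ (Φ ω f) (Ψ ω f) : ℂ) := by
      intro ω
      rw [adjoint_inner_right]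
      exact (inner_conj_symm _ _).symm
    have h3 : (inner ℂ f (T f) : ℂ)
        = (starRingEnd ℂ) (∫ ω, (inner ℂ (Φ ω f) (Ψ ω f) : ℂ) ∂μ) := by
      rw [h1]; simp_rw [h2]; exact integral_conj
    calc (inner ℂ (T f) f : ℂ) = (starRingEnd ℂ) (inner ℂ f (T f)) := (inner_conj_symm _ _).symm
      _ = ∫ ω, (inner ℂ (Φ ω f) (Ψ ω f) : ℂ) ∂μ := by rw [h3, Complex.conj_conj]
  -- real part bounds and vanishing imaginary part
  have him : ∀ f : H, (inner ℂ (T f) f : ℂ).im = 0 := by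
    intro f
    have h := (hframe f).2.1
    rw [Complex.le_def] at h
    rw [hkey f, ← h.2]
    exact Complex.ofReal_im _
  have hre1 : ∀ f : H, A * ‖f‖ ^ 2 ≤ (inner ℂ (T f) f : ℂ).re := by
    intro f
    have h := (hframe f).2.1
    rw [Complex.le_def] at h
    rw [hkey f]
    have h1 := h.1
    rwa [Complex.ofReal_re] at h1
  have hre2 : ∀ f : H, (inner ℂ (T f) f : ℂ).re ≤ B * ‖f‖ ^ 2 := by
    intro f
    have h := (hframe f).2.2
    rw [Complex.le_def] at h
    rw [hkey f]
    have h1 := h.1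
    rwa [Complex.ofReal_re] at h1
  -- symmetry
  have hsym : T.IsSymmetric := by
    rw [LinearMap.isSymmetric_iff_inner_map_self_real]
    intro v
    rw [Complex.conj_eq_iff_im]
    exact him v
  have hcont : Continuous T := hsym.continuous
  set S : H →L[ℂ] H := ⟨T, hcont⟩ with hS
  have hSf : ∀ f : H, S f = ∫ ω, adjoint (Ψ ω) (Φ ω f) ∂μ := fun f => rfl
  have hsa : IsSelfAdjoint S := isSelfAdjoint_iff_isSymmetric.mpr hsym
  have hSinner : ∀ f : H, (inner ℂ (S f) f : ℂ) = inner ℂ (T f) f := fun f => rfl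
  have hre1' : ∀ f : H, A * ‖f‖ ^ 2 ≤ (inner ℂ (S f) f : ℂ).re := fun f => hre1 f
  have hre2' : ∀ f : H, (inner ℂ (S f) f : ℂ).re ≤ B * ‖f‖ ^ 2 := fun f => hre2 f
  -- positivity statements
  have hA1 : IsSelfAdjoint ((A : ℂ) • (1 : H →L[ℂ] H)) := by
    rw [IsSelfAdjoint, star_smul, star_one, Complex.star_def, Complex.conj_ofReal]
  have hB1 : IsSelfAdjoint ((B : ℂ) • (1 : H →L[ℂ] H)) := by
    rw [IsSelfAdjoint, star_smul, star_one, Complex.star_def, Complex.conj_ofReal]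
  have hreS : ∀ x : H, S.reApplyInnerSelf x = (inner ℂ (S x) x : ℂ).re := by
    intro x
    rw [reApplyInnerSelf_apply, RCLike.re_to_complex]
  have hposA : (S - (A : ℂ) • (1 : H →L[ℂ] H)).IsPositive := by
    constructor
    · exact isSelfAdjoint_iff_isSymmetric.mp (hsa.sub hA1)
    · intro x
      have hx : (inner ℂ ((S - (A : ℂ) • (1 : H →L[ℂ] H)) x) x : ℂ)
          = inner ℂ (S x) x - ((A * ‖x‖ ^ 2 : ℝ) : ℂ) := by
        simp only [sub_apply, smul_apply, one_apply, ContinuousLinearMap.one_apply, ContinuousLinearMap.id_apply, id_eq, inner_sub_left, inner_smul_left,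
          inner_self_eq_norm_sq_to_K, Complex.conj_ofReal]
        push_cast
        try ring
        try rfl
      rw [reApplyInnerSelf_apply, RCLike.re_to_complex, hx, Complex.sub_re,
        Complex.ofReal_re]
      linarith [hre1' x]
  have hposB : ((B : ℂ) • (1 : H →L[ℂ] H) - S).IsPositive := by
    constructor
    · exact isSelfAdjoint_iff_isSymmetric.mp (hB1.sub hsa)
    · intro x
      have hx : (inner ℂ (((B : ℂ) • (1 : H →L[ℂ] H) - S) x) x : ℂ)
          = ((B * ‖x‖ ^ 2 : ℝ) : ℂ) - inner ℂ (S x) x := by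
        simp only [sub_apply, smul_apply, one_apply, ContinuousLinearMap.one_apply, ContinuousLinearMap.id_apply, id_eq, inner_sub_left, inner_smul_left,
          inner_self_eq_norm_sq_to_K, Complex.conj_ofReal]
        push_cast
        try ring
        try rfl
      rw [reApplyInnerSelf_apply, RCLike.re_to_complex, hx, Complex.sub_re,
        Complex.ofReal_re]
      linarith [hre2' x]
  have hpos : S.IsPositive := by
    refine ⟨isSelfAdjoint_iff_isSymmetric.mp hsa, fun x => ?_⟩
    rw [hreS x]
    have h0 : (0:ℝ) ≤ A * ‖x‖ ^ 2 := by positivity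
    linarith [hre1' x]
  -- lower bound ‖S f‖ ≥ A ‖f‖
  have hlow : ∀ f : H, A * ‖f‖ ≤ ‖S f‖ := by
    intro f
    rcases eq_or_ne f 0 with rfl | hf
    · simp
    · have h1 : A * ‖f‖ ^ 2 ≤ (inner ℂ (S f) f : ℂ).re := hre1' f
      have h2 : (inner ℂ (S f) f : ℂ).re ≤ ‖(inner ℂ (S f) f : ℂ)‖ := Complex.re_le_norm _
      have h3 : ‖(inner ℂ (S f) f : ℂ)‖ ≤ ‖S f‖ * ‖f‖ := norm_inner_le_norm _ _
      have hf' : 0 < ‖f‖ := norm_pos_iff.mpr hf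
      nlinarith
  -- injectivity
  have hinj : Function.Injective S := by
    intro x y hxy
    have hx := hlow (x - y)
    rw [map_sub, hxy, sub_self, norm_zero] at hx
    have : ‖x - y‖ ≤ 0 := by
      by_contra h
      push_neg at h
      nlinarith
    rw [← sub_eq_zero]
    exact norm_le_zero_iff.mp this
  have hker : S.ker = ⊥ := LinearMap.ker_eq_bot.mpr hinj
  -- antilipschitz, closed range
  have hanti : AntilipschitzWith (⟨A, hA.le⟩ : NNReal)⁻¹ S := by
    apply ContinuousLinearMap.antilipschitz_of_bound
    intro x
    have := hlow x
    change ‖x‖ ≤ A⁻¹ * ‖S x‖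
    rw [inv_mul_eq_div, le_div_iff₀ hA]
    linarith [hlow x]
  have hclosed : IsClosed (Set.range S) := hanti.isClosed_range S.uniformContinuous
  have hclosed' : IsClosed ((S.range : Submodule ℂ H) : Set H) := by
    have : ((S.range : Submodule ℂ H) : Set H) = Set.range S := by
      ext x; simp [LinearMap.mem_range]
    rw [this]; exact hclosed
  haveI : CompleteSpace (S.range : Submodule ℂ H) :=
    hclosed'.completeSpace_coe
  have hrange : S.range = ⊤ := by
    rw [← Submodule.orthogonal_eq_bot_iff]
    rw [Submodule.eq_bot_iff]
    intro x hx
    have hx' : (inner ℂ (S x) x : ℂ) = 0 := hx (S x) ⟨x, rfl⟩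
    have hre := hre1' x
    rw [hx'] at hre
    simp only [Complex.zero_re] at hre
    have this := hre
    have h0 : ‖x‖ ^ 2 ≤ 0 := by nlinarith
    have : ‖x‖ = 0 := by nlinarith [sq_nonneg ‖x‖, norm_nonneg x]
    exact norm_eq_zero.mp this
  -- the inverse
  set e : H ≃L[ℂ] H := ContinuousLinearEquiv.ofBijective S hker hrange with he
  have heS : ∀ x, e x = S x := fun x => rfl
  refine ⟨S, hSf, hsa, hpos, hposA, hposB, e.symm.toContinuousLinearMap, ?_, ?_, ?_⟩
  · ext x
    simp only [ContinuousLinearMap.comp_apply, ContinuousLinearEquiv.coe_coe, one_apply]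
    rw [← heS]
    exact e.apply_symm_apply x
  · ext x
    simp only [ContinuousLinearMap.comp_apply, ContinuousLinearEquiv.coe_coe, one_apply]
    rw [← heS]
    exact e.symm_apply_apply x
  · apply ContinuousLinearMap.opNorm_le_bound _ (by positivity)
    intro g
    have hge : S (e.symm g) = g := by rw [← heS]; exact e.apply_symm_apply g
    have := hlow (e.symm g)
    rw [hge] at this
    rw [ContinuousLinearEquiv.coe_coe]
    rw [div_mul_eq_mul_div, le_div_iff₀ hA]
    calc ‖e.symm g‖ * A = A * ‖e.symm g‖ := by ring
      _ ≤ ‖g‖ := this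
      _ = 1 * ‖g‖ := (one_mul _).symm
end
end

section
/- Let (Φ, Ψ) be a continuous bi-g-frame for H with bounds A and B such that ω ↦ Ψ_ω* Φ_ω f is Bochner integrable for every f ∈ H, with invertible continuous bi-g-frame operator S_{Φ,Ψ}, and set S_{Ψ,Φ} = (S_{Φ,Ψ})*. Then for every f ∈ H the following reconstruction formulas hold: (1) f = ∫_Ω Ψ_ω* Φ_ω (S_{Φ,Ψ}⁻¹ f) dμ(ω); (2) f = ∫_Ω (Ψ_ω S_{Ψ,Φ}⁻¹)* Φ_ω f dμ(ω). -/
open MeasureTheory ContinuousLinearMap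
open scoped ComplexOrder

noncomputable section

variable {Ω : Type*} [MeasurableSpace Ω] {H : Type*}
  [NormedAddCommGroup H] [InnerProductSpace ℂ H] [CompleteSpace H]
  {G : Ω → Type*} [∀ ω, NormedAddCommGroup (G ω)]
  [∀ ω, InnerProductSpace ℂ (G ω)] [∀ ω, CompleteSpace (G ω)]

/-- reconstruction formulas. Let `(Φ, Ψ)` be a continuous bi-`g`-frame with
continuous bi-`g`-frame operator `S = S_{Φ,Ψ}` (so `S f = ∫_Ω Ψ_ω* Φ_ω f dμ(ω)`), invertible
with inverse `Sinv`, and let `S_{Ψ,Φ} = S*` with inverse `Tinv`. Then for every `f ∈ H`: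
(1) `f = ∫_Ω Ψ_ω* Φ_ω (S⁻¹ f) dμ(ω)`; (2) `f = ∫_Ω (Ψ_ω ∘ S_{Ψ,Φ}⁻¹)* Φ_ω f dμ(ω)`. -/
theorem biGFrame_reconstruction
    (μ : Measure Ω) (Φ Ψ : ∀ ω, H →L[ℂ] G ω) (A B : ℝ) (hA : 0 < A) (hAB : A ≤ B)
    (hframe : IsContBiGFrame μ Φ Ψ A B)
    (hBochner : ∀ f : H, Integrable (fun ω => adjoint (Ψ ω) (Φ ω f)) μ)
    (S : H →L[ℂ] H) (hS : ∀ f : H, S f = ∫ ω, adjoint (Ψ ω) (Φ ω f) ∂μ)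
    (Sinv : H →L[ℂ] H) (hS1 : S.comp Sinv = 1) (hS2 : Sinv.comp S = 1)
    (Tinv : H →L[ℂ] H) (hT1 : (adjoint S).comp Tinv = 1) (hT2 : Tinv.comp (adjoint S) = 1) :
    ∀ f : H,
      f = ∫ ω, adjoint (Ψ ω) (Φ ω (Sinv f)) ∂μ ∧
      f = ∫ ω, adjoint ((Ψ ω).comp Tinv) (Φ ω f) ∂μ := by
  intro f
  constructor
  · have := hS (Sinv f)
    rw [← this]
    have : S (Sinv f) = (S.comp Sinv) f := rfl
    rw [this, hS1]; rfl
  · have hadj : ∀ ω, adjoint ((Ψ ω).comp Tinv) = (adjoint Tinv).comp (adjoint (Ψ ω)) :=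
      fun ω => adjoint_comp _ _
    calc f = (adjoint Tinv) (S f) := by
            have h := congrArg adjoint hT1
            rw [adjoint_comp, adjoint_adjoint, show (adjoint (1 : H →L[ℂ] H)) = 1 from adjoint_id] at h
            have : (adjoint Tinv) (S f) = ((adjoint Tinv).comp S) f := rfl
            rw [this, h]; rfl
      _ = (adjoint Tinv) (∫ ω, adjoint (Ψ ω) (Φ ω f) ∂μ) := by rw [hS]
      _ = ∫ ω, (adjoint Tinv) (adjoint (Ψ ω) (Φ ω f)) ∂μ := by
            rw [(adjoint Tinv).integral_comp_comm (hBochner f)]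
      _ = ∫ ω, adjoint ((Ψ ω).comp Tinv) (Φ ω f) ∂μ := by
            simp [hadj]
end
end

section
/- Let (Φ, Ψ) be a continuous bi-g-frame for H with bounds A and B such that ω ↦ Ψ_ω* Φ_ω f is Bochner integrable for every f ∈ H, with invertible continuous bi-g-frame operator S_{Φ,Ψ}, and set S_{Ψ,Φ} = (S_{Φ,Ψ})*. Define Φ̃_ω = Φ_ω ∘ S_{Φ,Ψ}⁻¹ and Ψ̃_ω = Ψ_ω ∘ S_{Ψ,Φ}⁻¹. Then the pair (Φ̃, Ψ̃) is a continuous bi-g-Bessel pair for H with bound 1/A; that is, for every f ∈ H, ∫_Ω ⟨Φ̃_ω f, Ψ̃_ω f⟩ dμ(ω) = ⟨f, S_{Ψ,Φ}⁻¹ f⟩ ≤ (1/A)‖f‖². -/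
open MeasureTheory ContinuousLinearMap
open scoped ComplexOrder

noncomputable section

variable {Ω : Type*} [MeasurableSpace Ω] {H : Type*}
  [NormedAddCommGroup H] [InnerProductSpace ℂ H] [CompleteSpace H]
  {G : Ω → Type*} [∀ ω, NormedAddCommGroup (G ω)]
  [∀ ω, InnerProductSpace ℂ (G ω)] [∀ ω, CompleteSpace (G ω)]

/-- let `(Φ, Ψ)` be a continuous bi-`g`-frame with bi-`g`-frame operator
`S = S_{Φ,Ψ}` (so `S f = ∫_Ω Ψ_ω* Φ_ω f dμ(ω)`), invertible with inverse `Sinv`, and let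
`S_{Ψ,Φ} = S*` have inverse `Tinv`. With `Φ̃_ω = Φ_ω ∘ S_{Φ,Ψ}⁻¹` and `Ψ̃_ω = Ψ_ω ∘ S_{Ψ,Φ}⁻¹`,
the pair `(Φ̃, Ψ̃)` is a continuous bi-`g`-Bessel pair with bound `1/A`: for every `f ∈ H`,
`∫_Ω ⟨Φ̃_ω f, Ψ̃_ω f⟩ dμ(ω) = ⟨f, S_{Ψ,Φ}⁻¹ f⟩ ≤ (1/A)‖f‖²`. -/
theorem canonicalDual_biGBessel
    (μ : Measure Ω) (Φ Ψ : ∀ ω, H →L[ℂ] G ω) (A B : ℝ) (hA : 0 < A) (hAB : A ≤ B)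
    (hframe : IsContBiGFrame μ Φ Ψ A B)
    (hBochner : ∀ f : H, Integrable (fun ω => adjoint (Ψ ω) (Φ ω f)) μ)
    (S : H →L[ℂ] H) (hS : ∀ f : H, S f = ∫ ω, adjoint (Ψ ω) (Φ ω f) ∂μ)
    (Sinv : H →L[ℂ] H) (hS1 : S.comp Sinv = 1) (hS2 : Sinv.comp S = 1)
    (Tinv : H →L[ℂ] H) (hT1 : (adjoint S).comp Tinv = 1) (hT2 : Tinv.comp (adjoint S) = 1) :
    ∀ f : H,
      Integrable (fun ω => (inner ℂ (Φ ω (Sinv f)) (Ψ ω (Tinv f)) : ℂ)) μ ∧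
      ∫ ω, (inner ℂ (Φ ω (Sinv f)) (Ψ ω (Tinv f)) : ℂ) ∂μ = (inner ℂ f (Tinv f) : ℂ) ∧
      (∫ ω, (inner ℂ (Φ ω (Sinv f)) (Ψ ω (Tinv f)) : ℂ) ∂μ).re ≤ (1 / A) * ‖f‖ ^ 2 := by
  -- A general rewriting: ⟪Φω g, Ψω c⟫ = ⟪adjoint (Ψω) (Φω g), c⟫
  have hrw : ∀ (g c : H) (ω : Ω),
      (inner ℂ (Φ ω g) (Ψ ω c) : ℂ) = inner ℂ (adjoint (Ψ ω) (Φ ω g)) c := by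
    intro g c ω
    rw [adjoint_inner_left]
  -- integral formula
  have hint : ∀ g c : H,
      ∫ ω, (inner ℂ (Φ ω g) (Ψ ω c) : ℂ) ∂μ = inner ℂ (S g) c := by
    intro g c
    simp_rw [hrw g c]
    have h1 : ∀ ω, (inner ℂ (adjoint (Ψ ω) (Φ ω g)) c : ℂ)
        = (starRingEnd ℂ) (inner ℂ c (adjoint (Ψ ω) (Φ ω g))) := by
      intro ω; rw [inner_conj_symm]
    simp_rw [h1]
    rw [integral_conj, integral_inner (hBochner g) c, ← hS, inner_conj_symm]
  have hintg : ∀ g c : H,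
      Integrable (fun ω => (inner ℂ (Φ ω g) (Ψ ω c) : ℂ)) μ := by
    intro g c
    simp_rw [hrw g c]
    exact (hBochner g).inner_const c
  -- Tinv = adjoint Sinv
  have hTS : Tinv = adjoint Sinv := by
    have h1 : (adjoint S).comp (adjoint Sinv) = 1 := by
      rw [← adjoint_comp, hS2, one_def, adjoint_id, ← one_def]
    ext x
    have hx1 : adjoint S (adjoint Sinv x) = x := by
      have := congrArg (fun T : H →L[ℂ] H => T x) h1
      simpa using this
    have hx2 : Tinv (adjoint S (adjoint Sinv x)) = adjoint Sinv x := by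
      have := congrArg (fun T : H →L[ℂ] H => T (adjoint Sinv x)) hT2
      simpa using this
    rw [hx1] at hx2
    exact hx2
  intro f
  set g := Sinv f with hg
  have hSg : S g = f := by
    have := congrArg (fun T : H →L[ℂ] H => T f) hS1
    simpa using this
  refine ⟨hintg g (Tinv f), ?_, ?_⟩
  · rw [hint g (Tinv f), hSg]
  · -- frame inequality at g
    obtain ⟨hI, hlow, hup⟩ := hframe g
    rw [hint g g, hSg] at hlow hup
    rw [Complex.le_def] at hlow
    have him : (inner ℂ f g : ℂ).im = 0 := by
      rw [← hlow.2, Complex.ofReal_im]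
    have hre : A * ‖g‖ ^ 2 ≤ (inner ℂ f g : ℂ).re := by
      have := hlow.1
      rwa [Complex.ofReal_re] at this
    -- the integral equals ⟪f, Tinv f⟫ = ⟪g, f⟫
    rw [hint g (Tinv f), hSg, hTS, adjoint_inner_right]
    have hconj : (inner ℂ g f : ℂ) = (starRingEnd ℂ) (inner ℂ f g : ℂ) := by
      rw [inner_conj_symm]
    have hre2 : (inner ℂ g f : ℂ).re = (inner ℂ f g : ℂ).re := by
      rw [hconj, Complex.conj_re]
    rw [hre2]
    have hcs : (inner ℂ f g : ℂ).re ≤ ‖f‖ * ‖g‖ := by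
      calc (inner ℂ f g : ℂ).re ≤ ‖(inner ℂ f g : ℂ)‖ := Complex.re_le_norm _
        _ ≤ ‖f‖ * ‖g‖ := norm_inner_le_norm f g
    have hg0 : (0:ℝ) ≤ ‖g‖ := norm_nonneg _
    have hf0 : (0:ℝ) ≤ ‖f‖ := norm_nonneg _
    rw [div_mul_eq_mul_div, le_div_iff₀ hA, one_mul]
    nlinarith [sq_nonneg (‖f‖ - A * ‖g‖), mul_le_mul_of_nonneg_left hcs (le_of_lt hA),
      mul_le_mul_of_nonneg_left hre (le_of_lt hA)]
end
end

section
/- Let Φ and Ψ be continuous g-Bessel families with bounds B_Φ and B_Ψ respectively, such that (Φ, Ψ) is a continuous bi-g-frame for H, and such that ω ↦ Ψ_ω* Φ_ω f is Bochner integrable for every f ∈ H. Let (Λ, Γ) be a pair of families of bounded operators Λ_ω, Γ_ω : H → K_ω such that ω ↦ Γ_ω* Λ_ω f is Bochner integrable for every f ∈ H. Suppose there are constants α, β, γ ∈ [0,1) with max{α + γ, β} < 1 such that for every f ∈ H: ‖∫_Ω (Ψ_ω* Φ_ω − Γ_ω* Λ_ω) f dμ(ω)‖ ≤ α‖∫_Ω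 Ψ_ω* Φ_ω f dμ(ω)‖ + β‖∫_Ω Γ_ω* Λ_ω f dμ(ω)‖ + γ‖f‖. Then (Λ, Γ) is a continuous bi-g-Bessel pair for H with bound ((1+α)√(B_Φ B_Ψ) + γ)/(1−β). -/
open MeasureTheory ContinuousLinearMap
open scoped ComplexOrder

noncomputable section

variable {Ω : Type*} [MeasurableSpace Ω] {H : Type*}
  [NormedAddCommGroup H] [InnerProductSpace ℂ H] [CompleteSpace H]
  {G : Ω → Type*} [∀ ω, NormedAddCommGroup (G ω)]
  [∀ ω, InnerProductSpace ℂ (G ω)] [∀ ω, CompleteSpace (G ω)]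

/-- `Φ` is a continuous `g`-Bessel family with bound `B₀`. -/
def IsContGBessel (μ : Measure Ω) (Φ : ∀ ω, H →L[ℂ] G ω) (B₀ : ℝ) : Prop :=
  ∀ f : H,
    Integrable (fun ω => ‖Φ ω f‖ ^ 2) μ ∧
    ∫ ω, ‖Φ ω f‖ ^ 2 ∂μ ≤ B₀ * ‖f‖ ^ 2

/-- `(Λ, Γ)` is a continuous bi-`g`-Bessel pair with bound `D`. -/
def IsContBiGBessel (μ : Measure Ω) (Λ Γ : ∀ ω, H →L[ℂ] G ω) (D : ℝ) : Prop :=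
  ∀ f : H,
    Integrable (fun ω => (inner ℂ (Λ ω f) (Γ ω f) : ℂ)) μ ∧
    (∫ ω, (inner ℂ (Λ ω f) (Γ ω f) : ℂ) ∂μ).re ≤ D * ‖f‖ ^ 2

set_option linter.unusedSectionVars false

lemma aux_inner_left_integrable {μ : Measure Ω} {F : Ω → H} (hF : Integrable F μ) (g : H) :
    Integrable (fun ω => (inner ℂ (F ω) g : ℂ)) μ := by
  have h1 : Integrable (fun ω => (inner ℂ g (F ω) : ℂ)) μ :=
    (innerSL ℂ g).integrable_comp hF
  have h2 := (Complex.conjCLE : ℂ →L[ℝ] ℂ).integrable_comp h1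
  simpa using h2

lemma aux_integral_inner_left {μ : Measure Ω} {F : Ω → H} (hF : Integrable F μ) (g : H) :
    ∫ ω, (inner ℂ (F ω) g : ℂ) ∂μ = (inner ℂ (∫ ω, F ω ∂μ) g : ℂ) := by
  have h1 : Integrable (fun ω => (inner ℂ g (F ω) : ℂ)) μ :=
    (innerSL ℂ g).integrable_comp hF
  calc ∫ ω, (inner ℂ (F ω) g : ℂ) ∂μ
      = ∫ ω, (starRingEnd ℂ) (inner ℂ g (F ω) : ℂ) ∂μ := by simp [inner_conj_symm]
    _ = (starRingEnd ℂ) (∫ ω, (inner ℂ g (F ω) : ℂ) ∂μ) := integral_conj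
    _ = (starRingEnd ℂ) (inner ℂ g (∫ ω, F ω ∂μ) : ℂ) := by rw [integral_inner hF]
    _ = _ := inner_conj_symm _ _

lemma aux_S_bound (μ : Measure Ω) (Φ Ψ : ∀ ω, H →L[ℂ] G ω) (BΦ BΨ : ℝ)
    (hBΦ : 0 < BΦ) (hBΨ : 0 < BΨ)
    (hΦ : IsContGBessel μ Φ BΦ) (hΨ : IsContGBessel μ Ψ BΨ)
    (hBochner₁ : ∀ f : H, Integrable (fun ω => adjoint (Ψ ω) (Φ ω f)) μ)
    (f : H) :
    ‖∫ ω, adjoint (Ψ ω) (Φ ω f) ∂μ‖ ≤ Real.sqrt (BΦ * BΨ) * ‖f‖ := by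
  set S : H := ∫ ω, adjoint (Ψ ω) (Φ ω f) ∂μ with hSdef
  by_cases hf0 : f = 0
  · subst hf0
    simp [hSdef]
  by_cases hS0 : S = 0
  · rw [hS0]; simp; positivity
  -- measurability of norms
  have hΦm : AEStronglyMeasurable (fun ω => ‖Φ ω f‖) μ := by
    have := Real.continuous_sqrt.comp_aestronglyMeasurable (hΦ f).1.aestronglyMeasurable
    simpa [Real.sqrt_sq] using this
  have hΨm : AEStronglyMeasurable (fun ω => ‖Ψ ω S‖) μ := by
    have := Real.continuous_sqrt.comp_aestronglyMeasurable (hΨ S).1.aestronglyMeasurable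
    simpa [Real.sqrt_sq] using this
  have hinner_eq : ∀ ω, (inner ℂ (adjoint (Ψ ω) (Φ ω f)) S : ℂ) = inner ℂ (Φ ω f) (Ψ ω S) :=
    fun ω => adjoint_inner_left _ _ _
  have hint1 : Integrable (fun ω => (inner ℂ (Φ ω f) (Ψ ω S) : ℂ)) μ := by
    have := aux_inner_left_integrable (hBochner₁ f) S
    simpa [hinner_eq] using this
  have hIeq : (inner ℂ S S : ℂ) = ∫ ω, (inner ℂ (Φ ω f) (Ψ ω S) : ℂ) ∂μ := by
    have h := aux_integral_inner_left (hBochner₁ f) S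
    rw [← hSdef] at h
    rw [← h]
    exact integral_congr_ae (Filter.Eventually.of_forall fun ω => hinner_eq ω)
  have key : ∀ t : ℝ, 0 < t →
      ‖S‖ ^ 2 ≤ (t * (BΦ * ‖f‖ ^ 2) + (BΨ * ‖S‖ ^ 2) / t) / 2 := by
    intro t ht
    have h1 : ‖S‖ ^ 2 = (∫ ω, (inner ℂ (Φ ω f) (Ψ ω S) : ℂ) ∂μ).re := by
      rw [← hIeq]
      simpa using (inner_self_eq_norm_sq (𝕜 := ℂ) S).symm
    have h2 : (∫ ω, (inner ℂ (Φ ω f) (Ψ ω S) : ℂ) ∂μ).re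
        = ∫ ω, ((inner ℂ (Φ ω f) (Ψ ω S) : ℂ)).re ∂μ := by
      simpa using (integral_re hint1).symm
    have hbound : Integrable (fun ω => (t * ‖Φ ω f‖ ^ 2 + ‖Ψ ω S‖ ^ 2 / t) / 2) μ :=
      (((hΦ f).1.const_mul t).add ((hΨ S).1.div_const t)).div_const 2
    have h3 : ∫ ω, ((inner ℂ (Φ ω f) (Ψ ω S) : ℂ)).re ∂μ
        ≤ ∫ ω, (t * ‖Φ ω f‖ ^ 2 + ‖Ψ ω S‖ ^ 2 / t) / 2 ∂μ := by
      refine integral_mono hint1.re hbound fun ω => ?_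
      have ha : ((inner ℂ (Φ ω f) (Ψ ω S) : ℂ)).re ≤ ‖Φ ω f‖ * ‖Ψ ω S‖ := by
        refine le_trans (Complex.re_le_norm _) ?_
        exact norm_inner_le_norm _ _
      have hb : ‖Φ ω f‖ * ‖Ψ ω S‖ ≤ (t * ‖Φ ω f‖ ^ 2 + ‖Ψ ω S‖ ^ 2 / t) / 2 := by
        have h4 := two_mul_le_add_sq (Real.sqrt t * ‖Φ ω f‖) (‖Ψ ω S‖ / Real.sqrt t)
        have hst : 0 < Real.sqrt t := Real.sqrt_pos.mpr ht
        have hsq : Real.sqrt t ^ 2 = t := Real.sq_sqrt ht.le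
        rw [div_pow, mul_pow, hsq] at h4
        have : 2 * (Real.sqrt t * ‖Φ ω f‖) * (‖Ψ ω S‖ / Real.sqrt t)
            = 2 * (‖Φ ω f‖ * ‖Ψ ω S‖) := by field_simp
        rw [this] at h4
        linarith
      exact le_trans ha hb
    have h5 : ∫ ω, (t * ‖Φ ω f‖ ^ 2 + ‖Ψ ω S‖ ^ 2 / t) / 2 ∂μ
        = (t * ∫ ω, ‖Φ ω f‖ ^ 2 ∂μ + (∫ ω, ‖Ψ ω S‖ ^ 2 ∂μ) / t) / 2 := by
      rw [integral_div, integral_add ((hΦ f).1.const_mul t) ((hΨ S).1.div_const t),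
        integral_const_mul, integral_div]
    have h6 : t * ∫ ω, ‖Φ ω f‖ ^ 2 ∂μ ≤ t * (BΦ * ‖f‖ ^ 2) :=
      mul_le_mul_of_nonneg_left (hΦ f).2 ht.le
    have h7 : (∫ ω, ‖Ψ ω S‖ ^ 2 ∂μ) / t ≤ (BΨ * ‖S‖ ^ 2) / t := by
      gcongr
      exact (hΨ S).2
    calc ‖S‖ ^ 2 = ∫ ω, ((inner ℂ (Φ ω f) (Ψ ω S) : ℂ)).re ∂μ := by rw [h1, h2]
      _ ≤ _ := h3
      _ = _ := h5
      _ ≤ _ := by linarith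
  -- choose optimal t
  have hfn : 0 < ‖f‖ := norm_pos_iff.mpr hf0
  have hSn : 0 < ‖S‖ := norm_pos_iff.mpr hS0
  set a := Real.sqrt BΦ with ha
  set b := Real.sqrt BΨ with hb
  have ha0 : 0 < a := Real.sqrt_pos.mpr hBΦ
  have hb0 : 0 < b := Real.sqrt_pos.mpr hBΨ
  have ha2 : a ^ 2 = BΦ := Real.sq_sqrt hBΦ.le
  have hb2 : b ^ 2 = BΨ := Real.sq_sqrt hBΨ.le
  have hab : Real.sqrt (BΦ * BΨ) = a * b := Real.sqrt_mul hBΦ.le _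
  set t : ℝ := (b * ‖S‖) / (a * ‖f‖) with htdef
  have ht : 0 < t := by positivity
  have hk := key t ht
  have heq : (t * (BΦ * ‖f‖ ^ 2) + (BΨ * ‖S‖ ^ 2) / t) / 2 = a * b * ‖S‖ * ‖f‖ := by
    rw [htdef, ← ha2, ← hb2]
    field_simp
    ring
  rw [heq] at hk
  rw [hab]
  nlinarith [hk, hSn, hfn]

/-- stability of continuous bi-`g`-Bessel pairs. -/
theorem stability_biGBessel
    (μ : Measure Ω) (Φ Ψ Λ Γ : ∀ ω, H →L[ℂ] G ω) (BΦ BΨ A B : ℝ)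
    (hBΦ : 0 < BΦ) (hBΨ : 0 < BΨ)
    (hΦ : IsContGBessel μ Φ BΦ) (hΨ : IsContGBessel μ Ψ BΨ)
    (hA : 0 < A) (hAB : A ≤ B) (hframe : IsContBiGFrame μ Φ Ψ A B)
    (hBochner₁ : ∀ f : H, Integrable (fun ω => adjoint (Ψ ω) (Φ ω f)) μ)
    (hBochner₂ : ∀ f : H, Integrable (fun ω => adjoint (Γ ω) (Λ ω f)) μ)
    (α β γ : ℝ) (hα : 0 ≤ α) (hα1 : α < 1) (hβ : 0 ≤ β) (hβ1 : β < 1)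
    (hγ : 0 ≤ γ) (hγ1 : γ < 1) (hmax : max (α + γ) β < 1)
    (hineq : ∀ f : H,
      ‖∫ ω, (adjoint (Ψ ω) (Φ ω f) - adjoint (Γ ω) (Λ ω f)) ∂μ‖ ≤
        α * ‖∫ ω, adjoint (Ψ ω) (Φ ω f) ∂μ‖ + β * ‖∫ ω, adjoint (Γ ω) (Λ ω f) ∂μ‖ +
          γ * ‖f‖) :
    IsContBiGBessel μ Λ Γ (((1 + α) * Real.sqrt (BΦ * BΨ) + γ) / (1 - β)) := by
  intro f
  set S : H := ∫ ω, adjoint (Ψ ω) (Φ ω f) ∂μ with hSdef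
  set T : H := ∫ ω, adjoint (Γ ω) (Λ ω f) ∂μ with hTdef
  have hinner_eq : ∀ ω, (inner ℂ (adjoint (Γ ω) (Λ ω f)) f : ℂ) = inner ℂ (Λ ω f) (Γ ω f) :=
    fun ω => adjoint_inner_left _ _ _
  have hint : Integrable (fun ω => (inner ℂ (Λ ω f) (Γ ω f) : ℂ)) μ := by
    have := aux_inner_left_integrable (hBochner₂ f) f
    simpa [hinner_eq] using this
  refine ⟨hint, ?_⟩
  -- the integral equals ⟪T, f⟫
  have hIeq : ∫ ω, (inner ℂ (Λ ω f) (Γ ω f) : ℂ) ∂μ = (inner ℂ T f : ℂ) := by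
    have h := aux_integral_inner_left (hBochner₂ f) f
    rw [← hTdef] at h
    rw [← h]
    exact integral_congr_ae (Filter.Eventually.of_forall fun ω => (hinner_eq ω).symm)
  -- norm bounds
  have hS : ‖S‖ ≤ Real.sqrt (BΦ * BΨ) * ‖f‖ :=
    aux_S_bound μ Φ Ψ BΦ BΨ hBΦ hBΨ hΦ hΨ hBochner₁ f
  have hsub : ‖S - T‖ ≤ α * ‖S‖ + β * ‖T‖ + γ * ‖f‖ := by
    have h := hineq f
    rwa [integral_sub (hBochner₁ f) (hBochner₂ f), ← hSdef, ← hTdef] at h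
  have hT1 : ‖T‖ ≤ ‖S‖ + ‖S - T‖ := by
    have h := norm_sub_le S (S - T)
    rwa [sub_sub_cancel] at h
  have hβpos : (0:ℝ) < 1 - β := by linarith
  have hT2 : (1 - β) * ‖T‖ ≤ ((1 + α) * Real.sqrt (BΦ * BΨ) + γ) * ‖f‖ := by
    nlinarith [hS, hsub, hT1, norm_nonneg T, norm_nonneg S, norm_nonneg f,
      Real.sqrt_nonneg (BΦ * BΨ)]
  have hT3 : ‖T‖ ≤ (((1 + α) * Real.sqrt (BΦ * BΨ) + γ) / (1 - β)) * ‖f‖ := by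
    rw [div_mul_eq_mul_div, le_div_iff₀ hβpos]
    linarith [hT2]
  rw [hIeq]
  have hre : (inner ℂ T f : ℂ).re ≤ ‖T‖ * ‖f‖ := by
    have := re_inner_le_norm (𝕜 := ℂ) (E := H) T f
    simpa using this
  calc (inner ℂ T f : ℂ).re ≤ ‖T‖ * ‖f‖ := hre
    _ ≤ (((1 + α) * Real.sqrt (BΦ * BΨ) + γ) / (1 - β)) * ‖f‖ * ‖f‖ :=
        mul_le_mul_of_nonneg_right hT3 (norm_nonneg f)
    _ = (((1 + α) * Real.sqrt (BΦ * BΨ) + γ) / (1 - β)) * ‖f‖ ^ 2 := by ring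
end
end

section
/- Let Φ and Ψ be continuous g-Bessel families with bounds B_Φ and B_Ψ respectively, and let (Φ, Ψ) be a continuous bi-g-frame for H with bounds A and B, with ω ↦ Ψ_ω* Φ_ω f Bochner integrable for every f ∈ H. Let (Λ, Γ) be a pair of families of bounded operators Λ_ω, Γ_ω : H → K_ω such that ω ↦ Γ_ω* Λ_ω f is Bochner integrable for every f ∈ H. If there exists a constant D with 0 < D < A and D√(B/A) < 1 such that ‖∫_Ω (Ψ_ω* Φ_ω − Γ_ω* Λ_ω) f dμ(ω)‖ ≤ D‖f‖ for all f ∈ H, then (Λ, Γ) is a continuous bi-g-Bessel pair for H with bound √(B_Φ B_Ψ) + D√(B/A). -/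
open MeasureTheory ContinuousLinearMap
open scoped ComplexOrder

noncomputable section

variable {Ω : Type*} [MeasurableSpace Ω] {H : Type*}
  [NormedAddCommGroup H] [InnerProductSpace ℂ H] [CompleteSpace H]
  {G : Ω → Type*} [∀ ω, NormedAddCommGroup (G ω)]
  [∀ ω, InnerProductSpace ℂ (G ω)] [∀ ω, CompleteSpace (G ω)]

/-!
For `f : H` put `g = ∫ Ψ_ω* Φ_ω f`. Then `‖g‖² = ∫ ⟪Ψ_ω g, Φ_ω f⟫`, and Cauchy–Schwarz in
`L²(μ)` together with the two Bessel bounds gives `‖g‖ ≤ √(B_Φ B_Ψ) ‖f‖`. The perturbation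
hypothesis moves this to `‖∫ Γ_ω* Λ_ω f‖ ≤ (√(B_Φ B_Ψ) + D) ‖f‖`, and
`∫ ⟪Λ_ω f, Γ_ω f⟫ = ⟪∫ Γ_ω* Λ_ω f, f⟫` turns it into the Bessel bound, since `1 ≤ √(B/A)`.
-/

open Real

section CauchySchwarz

variable {α : Type*} [MeasurableSpace α] {μ : Measure α}

theorem memLp_two_of_integrable_sq {a : α → ℝ} (ha : 0 ≤ᵐ[μ] a)
    (ha2 : Integrable (fun x => a x ^ 2) μ) : MemLp a 2 μ :=
  (memLp_two_iff_integrable_sq ((continuous_sqrt.comp_aestronglyMeasurable ha2.1).congr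
    (ha.mono fun _ hx => sqrt_sq hx))).2 ha2

theorem integral_mul_le_sqrt_mul_sqrt {a b : α → ℝ} (ha : 0 ≤ᵐ[μ] a) (hb : 0 ≤ᵐ[μ] b)
    (ha2 : MemLp a 2 μ) (hb2 : MemLp b 2 μ) :
    ∫ x, a x * b x ∂μ ≤ √(∫ x, a x ^ 2 ∂μ) * √(∫ x, b x ^ 2 ∂μ) := by
  simpa [sqrt_eq_rpow] using integral_mul_le_Lp_mul_Lq_of_nonneg HolderConjugate.two_two ha hb
    (by simpa using ha2) (by simpa using hb2)

end CauchySchwarz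

section Bessel

variable {μ : Measure Ω}

theorem IsContGBessel.norm_integral_adjoint_comp_le {Φ Ψ : ∀ ω, H →L[ℂ] G ω} {BΦ BΨ : ℝ}
    (hΦ : IsContGBessel μ Φ BΦ) (hΨ : IsContGBessel μ Ψ BΨ) {f : H}
    (hf : Integrable (fun ω => adjoint (Ψ ω) (Φ ω f)) μ) :
    ‖∫ ω, adjoint (Ψ ω) (Φ ω f) ∂μ‖ ≤ √(BΦ * BΨ) * ‖f‖ := by
  have memLp_norm {Θ : ∀ ω, H →L[ℂ] G ω} {B₀ : ℝ} (hΘ : IsContGBessel μ Θ B₀) (h : H) :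
      MemLp (fun ω => ‖Θ ω h‖) 2 μ :=
    memLp_two_of_integrable_sq (ae_of_all _ fun _ => norm_nonneg _) (hΘ h).1
  set g := ∫ ω, adjoint (Ψ ω) (Φ ω f) ∂μ
  have hΨg : 0 ≤ ∫ ω, ‖Ψ ω g‖ ^ 2 ∂μ := integral_nonneg fun _ => sq_nonneg _
  have hg_sq : ‖g‖ ^ 2 ≤ √(BΦ * BΨ) * ‖f‖ * ‖g‖ :=
    calc ‖g‖ ^ 2 = ‖∫ ω, (inner ℂ (Ψ ω g) (Φ ω f) : ℂ) ∂μ‖ := by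
          simp_rw [← adjoint_inner_right]
          rw [integral_inner hf, inner_self_eq_norm_sq_to_K, norm_pow, RCLike.norm_ofReal, abs_norm]
      _ ≤ ∫ ω, ‖Ψ ω g‖ * ‖Φ ω f‖ ∂μ :=
          norm_integral_le_of_norm_le ((memLp_norm hΨ g).integrable_mul (memLp_norm hΦ f))
            (ae_of_all _ fun _ => norm_inner_le_norm _ _)
      _ ≤ √(∫ ω, ‖Ψ ω g‖ ^ 2 ∂μ) * √(∫ ω, ‖Φ ω f‖ ^ 2 ∂μ) :=
          integral_mul_le_sqrt_mul_sqrt (ae_of_all _ fun _ => norm_nonneg _)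
            (ae_of_all _ fun _ => norm_nonneg _) (memLp_norm hΨ g) (memLp_norm hΦ f)
      _ ≤ √(BΨ * ‖g‖ ^ 2 * (BΦ * ‖f‖ ^ 2)) := by
          rw [← sqrt_mul hΨg]
          gcongr
          exacts [hΨg.trans (hΨ g).2, (hΨ g).2, (hΦ f).2]
      _ = √(BΦ * BΨ) * ‖f‖ * ‖g‖ := by
          rw [show BΨ * ‖g‖ ^ 2 * (BΦ * ‖f‖ ^ 2) = BΦ * BΨ * (‖f‖ * ‖g‖) ^ 2 by ring,
            sqrt_mul' _ (sq_nonneg _), sqrt_sq (by positivity), mul_assoc]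
  rcases (norm_nonneg g).eq_or_lt with hg | hg
  · rw [← hg]; positivity
  · exact le_of_mul_le_mul_right (by rwa [← sq]) hg

theorem integral_inner_eq_inner_integral_adjoint_comp {Λ Γ : ∀ ω, H →L[ℂ] G ω} {f : H}
    (hf : Integrable (fun ω => adjoint (Γ ω) (Λ ω f)) μ) :
    ∫ ω, (inner ℂ (Λ ω f) (Γ ω f) : ℂ) ∂μ = inner ℂ (∫ ω, adjoint (Γ ω) (Λ ω f) ∂μ) f := by
  rw [← inner_conj_symm (𝕜 := ℂ), ← integral_inner hf, ← integral_conj]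
  simp only [inner_conj_symm, adjoint_inner_left]

theorem isContBiGBessel_of_norm_integral_adjoint_comp_le {Λ Γ : ∀ ω, H →L[ℂ] G ω} {C : ℝ}
    (hint : ∀ f, Integrable (fun ω => adjoint (Γ ω) (Λ ω f)) μ)
    (hC : ∀ f, ‖∫ ω, adjoint (Γ ω) (Λ ω f) ∂μ‖ ≤ C * ‖f‖) : IsContBiGBessel μ Λ Γ C := by
  intro f
  refine ⟨by simpa only [adjoint_inner_left] using (hint f).inner_const (𝕜 := ℂ) f, ?_⟩
  rw [integral_inner_eq_inner_integral_adjoint_comp (hint f)]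
  calc _ ≤ ‖∫ ω, adjoint (Γ ω) (Λ ω f) ∂μ‖ * ‖f‖ :=
        (Complex.re_le_norm _).trans (norm_inner_le_norm _ _)
    _ ≤ C * ‖f‖ * ‖f‖ := by gcongr; exact hC f
    _ = C * ‖f‖ ^ 2 := by ring

end Bessel

theorem stability_biGBessel_of_small_perturbation_general
    (μ : Measure Ω) (Φ Ψ Λ Γ : ∀ ω, H →L[ℂ] G ω) (BΦ BΨ A B : ℝ)
    (hΦ : IsContGBessel μ Φ BΦ) (hΨ : IsContGBessel μ Ψ BΨ)
    (hA : 0 < A) (hAB : A ≤ B)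
    (hBochner₁ : ∀ f : H, Integrable (fun ω => adjoint (Ψ ω) (Φ ω f)) μ)
    (hBochner₂ : ∀ f : H, Integrable (fun ω => adjoint (Γ ω) (Λ ω f)) μ)
    (D : ℝ) (hD0 : 0 < D)
    (hineq : ∀ f : H,
      ‖∫ ω, (adjoint (Ψ ω) (Φ ω f) - adjoint (Γ ω) (Λ ω f)) ∂μ‖ ≤ D * ‖f‖) :
    IsContBiGBessel μ Λ Γ (Real.sqrt (BΦ * BΨ) + D * Real.sqrt (B / A)) := by
  have hD : D ≤ D * √(B / A) :=
    le_mul_of_one_le_right hD0.le (one_le_sqrt.2 ((one_le_div hA).2 hAB))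
  refine isContBiGBessel_of_norm_integral_adjoint_comp_le hBochner₂ fun f => ?_
  calc ‖∫ ω, adjoint (Γ ω) (Λ ω f) ∂μ‖
      = ‖∫ ω, adjoint (Ψ ω) (Φ ω f) ∂μ
          - ∫ ω, (adjoint (Ψ ω) (Φ ω f) - adjoint (Γ ω) (Λ ω f)) ∂μ‖ := by
        rw [integral_sub (hBochner₁ f) (hBochner₂ f), sub_sub_cancel]
    _ ≤ √(BΦ * BΨ) * ‖f‖ + D * ‖f‖ :=
        (norm_sub_le _ _).trans (add_le_add (hΦ.norm_integral_adjoint_comp_le hΨ (hBochner₁ f))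
          (hineq f))
    _ ≤ (√(BΦ * BΨ) + D * √(B / A)) * ‖f‖ := by rw [add_mul]; gcongr

/-- perturbation by a small operator distance gives a continuous bi-`g`-Bessel
pair with bound `√(B_Φ B_Ψ) + D√(B/A)`. -/
theorem stability_biGBessel_of_small_perturbation
    (μ : Measure Ω) (Φ Ψ Λ Γ : ∀ ω, H →L[ℂ] G ω) (BΦ BΨ A B : ℝ)
    (hBΦ : 0 < BΦ) (hBΨ : 0 < BΨ)
    (hΦ : IsContGBessel μ Φ BΦ) (hΨ : IsContGBessel μ Ψ BΨ)
    (hA : 0 < A) (hAB : A ≤ B) (hframe : IsContBiGFrame μ Φ Ψ A B)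
    (hBochner₁ : ∀ f : H, Integrable (fun ω => adjoint (Ψ ω) (Φ ω f)) μ)
    (hBochner₂ : ∀ f : H, Integrable (fun ω => adjoint (Γ ω) (Λ ω f)) μ)
    (D : ℝ) (hD0 : 0 < D) (hDA : D < A) (hD1 : D * Real.sqrt (B / A) < 1)
    (hineq : ∀ f : H,
      ‖∫ ω, (adjoint (Ψ ω) (Φ ω f) - adjoint (Γ ω) (Λ ω f)) ∂μ‖ ≤ D * ‖f‖) :
    IsContBiGBessel μ Λ Γ (Real.sqrt (BΦ * BΨ) + D * Real.sqrt (B / A)) :=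
  stability_biGBessel_of_small_perturbation_general μ Φ Ψ Λ Γ BΦ BΨ A B hΦ hΨ hA hAB hBochner₁
    hBochner₂ D hD0 hineq
end
end

section
/- Let (Φ, Ψ) be a continuous K-bi-g-frame for H, where K ∈ B(H), and let T ∈ B(H) with range(T) ⊆ range(K). Then (Φ, Ψ) is a continuous T-bi-g-frame for H; in particular, if α > 0 satisfies T T* ≤ α² K K* and A, B are bounds for the K-bi-g-frame, then (A/α²)‖T* f‖² ≤ ∫_Ω ⟨Φ_ω f, Ψ_ω f⟩ dμ(ω) ≤ B‖f‖² for all f ∈ H. -/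
/-! By Douglas's factorization, `range T ⊆ range K` gives a bounded `S` with `T = K S`: inverting
`K` on `(ker K)ᗮ` defines `S` linearly, and the closed graph theorem makes it bounded. Then
`T* = S* K*`, so `‖T* f‖ ≤ ‖S*‖ ‖K* f‖`, and the lower frame bound `A ‖K* f‖²` becomes
`(A / α²) ‖T* f‖²`. -/

open MeasureTheory ContinuousLinearMap
open scoped ComplexOrder

noncomputable section

variable {Ω : Type*} [MeasurableSpace Ω] {H : Type*}
  [NormedAddCommGroup H] [InnerProductSpace ℂ H] [CompleteSpace H]
  {G : Ω → Type*} [∀ ω, NormedAddCommGroup (G ω)]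
  [∀ ω, InnerProductSpace ℂ (G ω)] [∀ ω, CompleteSpace (G ω)]

def IsContKBiGFrame (μ : Measure Ω) (K : H →L[ℂ] H) (Φ Ψ : ∀ ω, H →L[ℂ] G ω)
    (A B : ℝ) : Prop :=
  ∀ f : H,
    Integrable (fun ω => (inner ℂ (Φ ω f) (Ψ ω f) : ℂ)) μ ∧
    ((A * ‖adjoint K f‖ ^ 2 : ℝ) : ℂ) ≤ ∫ ω, (inner ℂ (Φ ω f) (Ψ ω f) : ℂ) ∂μ ∧
    ∫ ω, (inner ℂ (Φ ω f) (Ψ ω f) : ℂ) ∂μ ≤ ((B * ‖f‖ ^ 2 : ℝ) : ℂ)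

section Factorization

variable {𝕜 E F V : Type*}

theorem LinearMap.continuous_of_injective_comp [NontriviallyNormedField 𝕜]
    [NormedAddCommGroup E] [NormedSpace 𝕜 E] [CompleteSpace E]
    [NormedAddCommGroup F] [NormedSpace 𝕜 F]
    [NormedAddCommGroup V] [NormedSpace 𝕜 V] [CompleteSpace V]
    {S : E →ₗ[𝕜] V} {K : V →L[𝕜] F} (hK : Function.Injective K)
    (hS : Continuous (K ∘ S)) : Continuous S := by
  refine S.continuous_of_isClosed_graph ?_
  have : (S.graph : Set (E × V)) = {p | K p.2 = (K ∘ S) p.1} := by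
    ext p
    exact hK.eq_iff.symm
  rw [this]
  exact isClosed_eq (K.continuous.comp continuous_snd) (hS.comp continuous_fst)

variable [RCLike 𝕜]
  [NormedAddCommGroup E] [NormedSpace 𝕜 E] [CompleteSpace E]
  [NormedAddCommGroup F] [NormedSpace 𝕜 F]
  [NormedAddCommGroup V] [InnerProductSpace 𝕜 V] [CompleteSpace V]

theorem ContinuousLinearMap.exists_comp_eq_of_range_subset {T : E →L[𝕜] F} {K : V →L[𝕜] F}
    (hrange : Set.range T ⊆ Set.range K) : ∃ S : E →L[𝕜] V, K ∘L S = T := by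
  let C := (LinearMap.ker K.toLinearMap)ᗮ
  have hC : IsCompl C (LinearMap.ker K.toLinearMap) := (Submodule.isCompl_orthogonal _).symm
  let e := LinearMap.kerComplementEquivRange K.toLinearMap hC
  have hKe : ∀ y, K (e.symm y) = y := fun y => congrArg Subtype.val (e.apply_symm_apply y)
  let S₀ : E →ₗ[𝕜] C := e.symm ∘ₗ
    LinearMap.codRestrict (LinearMap.range K.toLinearMap) T.toLinearMap fun x => hrange ⟨x, rfl⟩
  have hKS₀ : ∀ x, K (S₀ x) = T x := fun x => hKe _
  have hS₀ : Continuous S₀ := by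
    refine LinearMap.continuous_of_injective_comp (K := K.comp C.subtypeL) ?_ ?_
    · exact fun x y h => e.injective (Subtype.ext h)
    · simpa only [show K.comp C.subtypeL ∘ S₀ = T from funext hKS₀] using T.continuous
  exact ⟨C.subtypeL ∘L ⟨S₀, hS₀⟩, ext hKS₀⟩

end Factorization

section Douglas

variable {𝕜 E F V : Type*} [RCLike 𝕜]
  [NormedAddCommGroup E] [InnerProductSpace 𝕜 E] [CompleteSpace E]
  [NormedAddCommGroup F] [InnerProductSpace 𝕜 F] [CompleteSpace F]
  [NormedAddCommGroup V] [InnerProductSpace 𝕜 V] [CompleteSpace V]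

theorem ContinuousLinearMap.exists_sq_norm_adjoint_le_of_range_subset {T : E →L[𝕜] F}
    {K : V →L[𝕜] F} (hrange : Set.range T ⊆ Set.range K) :
    ∃ α : ℝ, 1 ≤ α ∧ ∀ f, ‖adjoint T f‖ ^ 2 ≤ α ^ 2 * ‖adjoint K f‖ ^ 2 := by
  obtain ⟨S, rfl⟩ := exists_comp_eq_of_range_subset hrange
  refine ⟨‖adjoint S‖ + 1, by linarith [norm_nonneg (adjoint S)], fun f => ?_⟩
  rw [← mul_pow]
  gcongr
  calc ‖adjoint (K ∘L S) f‖ = ‖adjoint S (adjoint K f)‖ := by rw [adjoint_comp, comp_apply]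
    _ ≤ ‖adjoint S‖ * ‖adjoint K f‖ := le_opNorm _ _
    _ ≤ (‖adjoint S‖ + 1) * ‖adjoint K f‖ := by gcongr; linarith

end Douglas

omit [∀ ω, CompleteSpace (G ω)] in
theorem IsContKBiGFrame.of_lower_bound_le {μ : Measure Ω} {K T : H →L[ℂ] H}
    {Φ Ψ : ∀ ω, H →L[ℂ] G ω} {A A' B : ℝ} (hframe : IsContKBiGFrame μ K Φ Ψ A B)
    (hAA' : ∀ f, A' * ‖adjoint T f‖ ^ 2 ≤ A * ‖adjoint K f‖ ^ 2) :
    IsContKBiGFrame μ T Φ Ψ A' B := fun f =>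
  let ⟨hint, hlower, hupper⟩ := hframe f
  ⟨hint, (Complex.real_le_real.mpr (hAA' f)).trans hlower, hupper⟩

/-- let `(Φ, Ψ)` be a continuous `K`-bi-`g`-frame with bounds `A, B`, and let
`T ∈ B(H)` with `range(T) ⊆ range(K)`.  Then `(Φ, Ψ)` is a continuous `T`-bi-`g`-frame; in
particular, whenever `α > 0` satisfies `T T* ≤ α² K K*` (i.e. `‖T* f‖² ≤ α²‖K* f‖²` for all
`f`), the pair `(Φ, Ψ)` is a continuous `T`-bi-`g`-frame with bounds `A/α²` and `B`. -/
theorem isContKBiGFrame_of_range_subset (μ : Measure Ω) (K T : H →L[ℂ] H)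
    (Φ Ψ : ∀ ω, H →L[ℂ] G ω) (A B : ℝ) (hA : 0 < A) (hAB : A ≤ B)
    (hframe : IsContKBiGFrame μ K Φ Ψ A B)
    (hrange : Set.range ⇑T ⊆ Set.range ⇑K) :
    (∃ A' B' : ℝ, 0 < A' ∧ A' ≤ B' ∧ IsContKBiGFrame μ T Φ Ψ A' B') ∧
    ∀ α : ℝ, 0 < α → (∀ f : H, ‖adjoint T f‖ ^ 2 ≤ α ^ 2 * ‖adjoint K f‖ ^ 2) →
      IsContKBiGFrame μ T Φ Ψ (A / α ^ 2) B := by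
  have hscaled : ∀ α : ℝ, 0 < α → (∀ f : H, ‖adjoint T f‖ ^ 2 ≤ α ^ 2 * ‖adjoint K f‖ ^ 2) →
      IsContKBiGFrame μ T Φ Ψ (A / α ^ 2) B := fun α hα hTK =>
    hframe.of_lower_bound_le fun f => calc
      A / α ^ 2 * ‖adjoint T f‖ ^ 2 ≤ A / α ^ 2 * (α ^ 2 * ‖adjoint K f‖ ^ 2) := by
        gcongr; exact hTK f
      _ = A * ‖adjoint K f‖ ^ 2 := by field_simp
  refine ⟨?_, hscaled⟩
  obtain ⟨α, hα, hTK⟩ := exists_sq_norm_adjoint_le_of_range_subset hrange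
  exact ⟨A / α ^ 2, B, by positivity, (div_le_self hA.le (one_le_pow₀ hα)).trans hAB,
    hscaled α (by linarith) hTK⟩
end
end

section
/- Let K, M ∈ B(H) with M K = K M, suppose K* is surjective (range(K*) = H), and let (Φ, Ψ) be a δ-tight continuous K-bi-g-frame for H for some δ > 0, i.e., δ‖K* f‖² = ∫_Ω ⟨Φ_ω f, Ψ_ω f⟩ dμ(ω) for all f ∈ H. Then the pair ({Φ_ω M*}_{ω∈Ω}, {Ψ_ω M*}_{ω∈Ω}) is a continuous K-bi-g-frame for H if and only if M is surjective. -/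
open MeasureTheory ContinuousLinearMap
open scoped ComplexOrder

set_option maxHeartbeats 1000000

noncomputable section

variable {Ω : Type*} [MeasurableSpace Ω] {H : Type*}
  [NormedAddCommGroup H] [InnerProductSpace ℂ H] [CompleteSpace H]
  {G : Ω → Type*} [∀ ω, NormedAddCommGroup (G ω)]
  [∀ ω, InnerProductSpace ℂ (G ω)] [∀ ω, CompleteSpace (G ω)]

/-- let `K, M ∈ B(H)` with `MK = KM`, `K*` surjective, and let `(Φ, Ψ)` be a
`δ`-tight continuous `K`-bi-`g`-frame (i.e. `δ‖K* f‖² = ∫_Ω ⟨Φ_ω f, Ψ_ω f⟩ dμ` for all `f`).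
Then `({Φ_ω M*}, {Ψ_ω M*})` is a continuous `K`-bi-`g`-frame iff `M` is surjective. -/
theorem isContKBiGFrame_comp_adjoint_iff_surjective (μ : Measure Ω) (K M : H →L[ℂ] H)
    (Φ Ψ : ∀ ω, H →L[ℂ] G ω)
    (hint : ∀ f : H, Integrable (fun ω => (inner ℂ (Φ ω f) (Ψ ω f) : ℂ)) μ)
    (hcomm : M.comp K = K.comp M)
    (hsurj : Function.Surjective ⇑(adjoint K))
    (δ : ℝ) (hδ : 0 < δ)
    (htight : ∀ f : H,
      ((δ * ‖adjoint K f‖ ^ 2 : ℝ) : ℂ) = ∫ ω, (inner ℂ (Φ ω f) (Ψ ω f) : ℂ) ∂μ) :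
    (∃ A B : ℝ, 0 < A ∧ A ≤ B ∧
      IsContKBiGFrame μ K (fun ω => (Φ ω).comp (adjoint M))
        (fun ω => (Ψ ω).comp (adjoint M)) A B) ↔ Function.Surjective ⇑M := by
  -- K* M* = M* K*
  have hKM : ∀ f : H, adjoint K (adjoint M f) = adjoint M (adjoint K f) := by
    intro f
    have h := congrArg adjoint hcomm
    rw [adjoint_comp, adjoint_comp] at h
    exact ContinuousLinearMap.ext_iff.mp h f
  -- the integral for the composed family
  have hval : ∀ f : H,
      ∫ ω, (inner ℂ (((Φ ω).comp (adjoint M)) f) (((Ψ ω).comp (adjoint M)) f) : ℂ) ∂μ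
        = ((δ * ‖adjoint M (adjoint K f)‖ ^ 2 : ℝ) : ℂ) := by
    intro f
    have := (htight (adjoint M f)).symm
    simpa [hKM f] using this
  constructor
  · rintro ⟨A, B, hA, hAB, hframe⟩
    -- lower bound : A ‖g‖² ≤ δ ‖M* g‖² for all g
    have hlow : ∀ g : H, A * ‖g‖ ^ 2 ≤ δ * ‖adjoint M g‖ ^ 2 := by
      intro g
      obtain ⟨f, rfl⟩ := hsurj g
      have h := (hframe f).2.1
      rw [hval f] at h
      exact_mod_cast h
    -- hence M M* is a unit
    have hunit : IsUnit (M.comp (adjoint M)) := by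
      have hcpos : (0 : NNReal) < ⟨A / δ, le_of_lt (div_pos hA hδ)⟩ := by
        exact_mod_cast div_pos hA hδ
      apply isUnit_of_forall_le_norm_inner_map (M.comp (adjoint M)) hcpos
      intro x
      have h1 : (inner ℂ ((M.comp (adjoint M)) x) x : ℂ)
          = inner ℂ (adjoint M x) (adjoint M x) := by
        simp [ContinuousLinearMap.comp_apply, ← adjoint_inner_right]
      rw [h1, inner_self_eq_norm_sq_to_K]
      simp only [norm_pow, RCLike.norm_ofReal, abs_norm]
      show ‖x‖ ^ 2 * (A / δ) ≤ _
      rw [← mul_div_assoc, div_le_iff₀ hδ]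
      nlinarith [hlow x]
    have hbij := isUnit_iff_bijective.mp hunit
    have : Function.Surjective (⇑M ∘ ⇑(adjoint M)) := by
      have := hbij.surjective
      simpa [ContinuousLinearMap.coe_comp'] using this
    exact this.of_comp
  · intro hMs
    obtain ⟨C, hC, hCy⟩ := M.exists_preimage_norm_le hMs
    -- M* is bounded below: ‖g‖ ≤ C ‖M* g‖
    have hbelow : ∀ g : H, ‖g‖ ≤ C * ‖adjoint M g‖ := by
      intro g
      obtain ⟨x, hx, hxn⟩ := hCy g
      have h1 : (‖g‖ : ℝ) ^ 2 = ‖(inner ℂ g g : ℂ)‖ := by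
        rw [inner_self_eq_norm_sq_to_K]
        simp only [norm_pow, RCLike.norm_ofReal, abs_norm]
      have h2 : (inner ℂ g g : ℂ) = inner ℂ x (adjoint M g) := by
        rw [adjoint_inner_right, hx]
      have h3 : ‖(inner ℂ x (adjoint M g) : ℂ)‖ ≤ ‖x‖ * ‖adjoint M g‖ :=
        norm_inner_le_norm x _
      have h4 : ‖g‖ ^ 2 ≤ C * ‖g‖ * ‖adjoint M g‖ := by
        rw [h1, h2]
        calc ‖(inner ℂ x (adjoint M g) : ℂ)‖ ≤ ‖x‖ * ‖adjoint M g‖ := h3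
          _ ≤ C * ‖g‖ * ‖adjoint M g‖ := by
              apply mul_le_mul_of_nonneg_right hxn (norm_nonneg _)
      rcases eq_or_lt_of_le (norm_nonneg g) with hg0 | hg0
      · rw [← hg0]; positivity
      · nlinarith [h4]
    refine ⟨δ / C ^ 2, max (δ / C ^ 2) (δ * (‖adjoint M‖ * ‖adjoint K‖) ^ 2),
      div_pos hδ (by positivity), le_max_left _ _, fun f => ?_⟩
    refine ⟨hint (adjoint M f), ?_, ?_⟩
    · rw [hval f, Complex.real_le_real]
      have h1 := hbelow (adjoint K f)
      have hC2 : (0:ℝ) < C ^ 2 := by positivity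
      rw [div_mul_eq_mul_div, div_le_iff₀ hC2]
      have hsq : ‖adjoint K f‖ ^ 2 ≤ (C * ‖adjoint M (adjoint K f)‖) ^ 2 :=
        pow_le_pow_left₀ (norm_nonneg _) h1 2
      nlinarith [hsq, hδ.le]
    · rw [hval f, Complex.real_le_real]
      have h1 : ‖adjoint M (adjoint K f)‖ ≤ ‖adjoint M‖ * (‖adjoint K‖ * ‖f‖) :=
        le_trans ((adjoint M).le_opNorm _)
          (mul_le_mul_of_nonneg_left ((adjoint K).le_opNorm f) (norm_nonneg _))
      have h1' : ‖adjoint M (adjoint K f)‖ ^ 2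
          ≤ (‖adjoint M‖ * (‖adjoint K‖ * ‖f‖)) ^ 2 :=
        pow_le_pow_left₀ (norm_nonneg _) h1 2
      have h2 : δ * ‖adjoint M (adjoint K f)‖ ^ 2
          ≤ δ * (‖adjoint M‖ * ‖adjoint K‖) ^ 2 * ‖f‖ ^ 2 := by
        nlinarith [h1', hδ.le]
      exact h2.trans (mul_le_mul_of_nonneg_right (le_max_right _ _) (by positivity))
end
end
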